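/- arXiv:1908.01297 — 2 statements merged into one kernel-verified Lean document; each statement's English description precedes it below -/
import Mathlib

section
/- Let n, l be positive natural numbers, let s be a finite index set, let (u_i)_{i∈s} be an orthonormal family of vectors in ℝ^n, let (λ_i)_{i∈s} be real numbers, and let X be a real n×l matrix. Then ‖Σ_{i∈s} λ_i u_i u_iᵀ X‖_F² ≤ (Σ_{i∈s} λ_i²) · (Σ_{i∈s} ‖Xᵀ u_i‖₂²). -/
open Matrix Finset

/-- For an orthonormal family `u i` (`i ∈ s`) in `ℝ^n`, reals `λ i`,
and a real `n × l` matrix `X`,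
`‖(∑ i ∈ s, λ i • u i u iᵀ) X‖_F² ≤ (∑ i ∈ s, λ i ^ 2) * (∑ i ∈ s, ‖Xᵀ u i‖₂²)`. -/
theorem frobenius_sq_le_of_orthonormal_filter
    {n l : ℕ} (hn : 0 < n) (hl : 0 < l) {ι : Type*} [DecidableEq ι] (s : Finset ι)
    (u : ι → (Fin n → ℝ)) (lam : ι → ℝ)
    (horth : ∀ i ∈ s, ∀ j ∈ s, u i ⬝ᵥ u j = if i = j then (1 : ℝ) else 0)
    (X : Matrix (Fin n) (Fin l) ℝ) :
    (∑ a : Fin n, ∑ b : Fin l,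
        (((∑ i ∈ s, lam i • vecMulVec (u i) (u i)) * X) a b) ^ 2)
      ≤ (∑ i ∈ s, (lam i) ^ 2) * (∑ i ∈ s, ∑ b : Fin l, ((Xᵀ *ᵥ u i) b) ^ 2) := by
  set c : ι → Fin l → ℝ := fun i b => (Xᵀ *ᵥ u i) b with hc
  have entry : ∀ a b, (((∑ i ∈ s, lam i • vecMulVec (u i) (u i)) * X) a b)
      = ∑ i ∈ s, lam i * u i a * c i b := by
    intro a b
    simp only [Matrix.mul_apply, Matrix.sum_apply, Matrix.smul_apply, vecMulVec_apply,
      smul_eq_mul, hc, Matrix.mulVec, dotProduct, Matrix.transpose_apply]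
    simp only [Finset.sum_mul]
    rw [Finset.sum_comm]
    refine Finset.sum_congr rfl fun i _ => ?_
    rw [Finset.mul_sum]
    exact Finset.sum_congr rfl fun x _ => by ring
  have lhs_eq : (∑ a : Fin n, ∑ b : Fin l,
        (((∑ i ∈ s, lam i • vecMulVec (u i) (u i)) * X) a b) ^ 2)
      = ∑ i ∈ s, (lam i) ^ 2 * ∑ b : Fin l, (c i b) ^ 2 := by
    simp only [entry]
    rw [Finset.sum_comm]
    have key : ∀ b : Fin l, (∑ a : Fin n, (∑ i ∈ s, lam i * u i a * c i b) ^ 2)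
        = ∑ i ∈ s, (lam i) ^ 2 * (c i b) ^ 2 := by
      intro b
      have expand : ∀ a : Fin n, (∑ i ∈ s, lam i * u i a * c i b) ^ 2
          = ∑ i ∈ s, ∑ j ∈ s, (lam i * c i b * (lam j * c j b)) * (u i a * u j a) := by
        intro a
        rw [sq, Finset.sum_mul_sum]
        exact Finset.sum_congr rfl fun i _ => Finset.sum_congr rfl fun j _ => by ring
      simp only [expand]
      rw [Finset.sum_comm]
      refine Finset.sum_congr rfl fun i hi => ?_
      rw [Finset.sum_comm]
      have step : ∀ j ∈ s, (∑ a : Fin n, (lam i * c i b * (lam j * c j b)) * (u i a * u j a))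
          = lam i * c i b * (lam j * c j b) * (if i = j then (1:ℝ) else 0) := by
        intro j hj
        rw [← Finset.mul_sum, ← horth i hi j hj]
        rfl
      rw [Finset.sum_congr rfl step, Finset.sum_eq_single i]
      · simp; ring
      · intro j _ hne
        simp [Ne.symm hne]
      · intro h; exact absurd hi h
    rw [Finset.sum_congr rfl (fun b _ => key b), Finset.sum_comm]
    exact Finset.sum_congr rfl fun i _ => (Finset.mul_sum _ _ _).symm
  rw [lhs_eq, Finset.sum_mul]
  apply Finset.sum_le_sum
  intro i hi
  have h1 : (∑ b : Fin l, (c i b) ^ 2) ≤ ∑ j ∈ s, ∑ b : Fin l, (c j b) ^ 2 :=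
    Finset.single_le_sum (f := fun j => ∑ b : Fin l, (c j b) ^ 2)
      (fun j _ => Finset.sum_nonneg fun b _ => sq_nonneg _) hi
  exact mul_le_mul_of_nonneg_left h1 (sq_nonneg (lam i))
end

section
/- Let A be a real symmetric n×n matrix with nonnegative entries, let D be the diagonal matrix with D_{ii} = Σ_j A_{ij}, assume d_min := min_i D_{ii} > 0, and let K be a positive integer. Then every real eigenvalue μ of the K-window DeepWalk graph filter matrix (1/K)(Σ_{k=1}^{K} (D^{-1}A)^k) D^{-1} satisfies |μ| ≤ 1 / d_min. -/
open Matrix Finset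

lemma pow_rowsum_one {m : Type*} [Fintype m] [DecidableEq m]
    (P : Matrix m m ℝ) (hP : ∀ i j, 0 ≤ P i j) (hrow : ∀ i, ∑ j, P i j = 1) (k : ℕ) :
    (∀ i j, 0 ≤ (P ^ k) i j) ∧ (∀ i, ∑ j, (P ^ k) i j = 1) := by
  induction k with
  | zero =>
    refine ⟨fun i j => ?_, fun i => ?_⟩
    · simp only [pow_zero, Matrix.one_apply]
      split_ifs <;> norm_num
    · simp [pow_zero, Matrix.one_apply, Finset.sum_ite_eq']
  | succ k ih =>
    have hmul : P ^ (k + 1) = P ^ k * P := pow_succ P k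
    refine ⟨fun i j => ?_, fun i => ?_⟩
    · rw [hmul, Matrix.mul_apply]
      exact Finset.sum_nonneg fun l _ => mul_nonneg (ih.1 i l) (hP l j)
    · rw [hmul]
      simp only [Matrix.mul_apply]
      rw [Finset.sum_comm]
      calc ∑ l, ∑ j, (P ^ k) i l * P l j
          = ∑ l, (P ^ k) i l * ∑ j, P l j := by simp [Finset.mul_sum]
        _ = 1 := by simp [hrow, ih.2 i]

/-- for a symmetric nonnegative `A` with positive minimal row sum
`d_min`, every real eigenvalue `μ` of the K-window DeepWalk filter
`(1/K)(∑_{k=1}^K (D^{-1}A)^k) D^{-1}` satisfies `|μ| ≤ 1 / d_min`. -/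
theorem deepwalk_filter_eigenvalue_bound
    {n : ℕ} (A : Matrix (Fin (n + 1)) (Fin (n + 1)) ℝ) (hA : A.IsSymm)
    (hnonneg : ∀ i j, 0 ≤ A i j)
    (hdmin : 0 < Finset.univ.inf' Finset.univ_nonempty (fun i => ∑ j, A i j))
    (K : ℕ) (hK : 0 < K) :
    let d : Fin (n + 1) → ℝ := fun i => ∑ j, A i j
    let dmin : ℝ := Finset.univ.inf' Finset.univ_nonempty d
    let Dinv : Matrix (Fin (n + 1)) (Fin (n + 1)) ℝ :=
      Matrix.diagonal (fun i => (d i)⁻¹)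
    let H : Matrix (Fin (n + 1)) (Fin (n + 1)) ℝ :=
      ((K : ℝ)⁻¹ • (∑ k ∈ Finset.Icc 1 K, (Dinv * A) ^ k)) * Dinv
    ∀ (μ : ℝ) (v : Fin (n + 1) → ℝ), v ≠ 0 →
      H *ᵥ v = μ • v → |μ| ≤ 1 / dmin := by
  intro d dmin Dinv H μ v hv heig
  -- basic facts about d and dmin
  have hdle : ∀ i, dmin ≤ d i := fun i =>
    Finset.inf'_le _ (Finset.mem_univ i)
  have hdpos : ∀ i, 0 < d i := fun i => lt_of_lt_of_le hdmin (hdle i)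
  have hdne : ∀ i, d i ≠ 0 := fun i => (hdpos i).ne'
  -- the random-walk matrix P and its entries
  set P : Matrix (Fin (n + 1)) (Fin (n + 1)) ℝ := Dinv * A with hPdef
  have hPapp : ∀ i j, P i j = (d i)⁻¹ * A i j := by
    intro i j
    simp [hPdef, Dinv, Matrix.diagonal_mul]
  have hPnn : ∀ i j, 0 ≤ P i j := fun i j => by
    rw [hPapp]
    exact mul_nonneg (inv_nonneg.2 (hdpos i).le) (hnonneg i j)
  have hProw : ∀ i, ∑ j, P i j = 1 := by
    intro i
    simp only [hPapp]
    rw [← Finset.mul_sum]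
    exact inv_mul_cancel₀ (hdne i)
  -- entries of H
  have hHapp : ∀ i j, H i j =
      (K : ℝ)⁻¹ * (∑ k ∈ Finset.Icc 1 K, (P ^ k) i j) * (d j)⁻¹ := by
    intro i j
    rw [show H = ((K : ℝ)⁻¹ • (∑ k ∈ Finset.Icc 1 K, P ^ k)) * Dinv from rfl,
      Matrix.mul_diagonal, Matrix.smul_apply, Matrix.sum_apply, smul_eq_mul]
  have hHnn : ∀ i j, 0 ≤ H i j := by
    intro i j
    rw [hHapp]
    refine mul_nonneg (mul_nonneg (inv_nonneg.2 (Nat.cast_nonneg K)) ?_)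
      (inv_nonneg.2 (hdpos j).le)
    exact Finset.sum_nonneg fun k _ => (pow_rowsum_one P hPnn hProw k).1 i j
  -- row sums of H are bounded by 1/dmin
  have hHrow : ∀ i, ∑ j, H i j ≤ 1 / dmin := by
    intro i
    have h1 : ∀ j, H i j ≤ (K : ℝ)⁻¹ * (∑ k ∈ Finset.Icc 1 K, (P ^ k) i j) * dmin⁻¹ := by
      intro j
      rw [hHapp]
      refine mul_le_mul_of_nonneg_left ?_
        (mul_nonneg (inv_nonneg.2 (Nat.cast_nonneg K))
          (Finset.sum_nonneg fun k _ => (pow_rowsum_one P hPnn hProw k).1 i j))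
      exact one_div dmin ▸ (inv_anti₀ hdmin (hdle j))
    calc ∑ j, H i j
        ≤ ∑ j, (K : ℝ)⁻¹ * (∑ k ∈ Finset.Icc 1 K, (P ^ k) i j) * dmin⁻¹ :=
          Finset.sum_le_sum fun j _ => h1 j
      _ = (K : ℝ)⁻¹ * (∑ k ∈ Finset.Icc 1 K, ∑ j, (P ^ k) i j) * dmin⁻¹ := by
          rw [← Finset.sum_mul, ← Finset.mul_sum, Finset.sum_comm]
      _ = (K : ℝ)⁻¹ * (K : ℝ) * dmin⁻¹ := by
          congr 2
          rw [Finset.sum_congr rfl fun k _ => (pow_rowsum_one P hPnn hProw k).2 i]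
          simp [Nat.card_Icc]
      _ = 1 / dmin := by
          rw [inv_mul_cancel₀ (by exact_mod_cast hK.ne' : (K : ℝ) ≠ 0), one_mul, one_div]
  -- choose a coordinate of maximal absolute value
  obtain ⟨i0, -, hi0⟩ := Finset.exists_max_image Finset.univ (fun i => |v i|)
    ⟨0, Finset.mem_univ 0⟩
  set b : ℝ := |v i0| with hb
  have hbpos : 0 < b := by
    obtain ⟨j, hj⟩ := Function.ne_iff.1 hv
    exact lt_of_lt_of_le (abs_pos.2 hj) (hi0 j (Finset.mem_univ j))
  have hkey : |μ| * b ≤ (1 / dmin) * b := by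
    have heq : (H *ᵥ v) i0 = μ * v i0 := by
      rw [heig]; rfl
    have : |μ| * b = |(H *ᵥ v) i0| := by rw [heq, abs_mul]
    rw [this]
    calc |(H *ᵥ v) i0| = |∑ j, H i0 j * v j| := by rw [Matrix.mulVec, dotProduct]
      _ ≤ ∑ j, |H i0 j * v j| := Finset.abs_sum_le_sum_abs _ _
      _ = ∑ j, H i0 j * |v j| := by
          refine Finset.sum_congr rfl fun j _ => ?_
          rw [abs_mul, abs_of_nonneg (hHnn i0 j)]
      _ ≤ ∑ j, H i0 j * b :=
          Finset.sum_le_sum fun j _ =>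
            mul_le_mul_of_nonneg_left (hi0 j (Finset.mem_univ j)) (hHnn i0 j)
      _ = (∑ j, H i0 j) * b := by rw [Finset.sum_mul]
      _ ≤ (1 / dmin) * b := mul_le_mul_of_nonneg_right (hHrow i0) hbpos.le
  exact le_of_mul_le_mul_right hkey hbpos
end
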